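/- If X ~ N(μ, s²) with s > 0 and |μ| ≤ ρ_U, where 0 < ρ_L ≤ ρ_U, then P(ρ_L ≤ |X| ≤ ρ_U) ≥ erf(2ρ_U/(√2 s)) − erf((ρ_L + ρ_U)/(√2 s)). -/
import Mathlib


open MeasureTheory ProbabilityTheory NNReal

noncomputable def erf (x : ℝ) : ℝ :=
  (2 / Real.sqrt Real.pi) * ∫ t in (0 : ℝ)..x, Real.exp (-t ^ 2)

lemma pdf_mono_aux (v : ℝ≥0) (hv : (0:ℝ) < v) {m1 m2 x : ℝ}
    (h : (x - m2) ^ 2 ≤ (x - m1) ^ 2) :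
    gaussianPDFReal m1 v x ≤ gaussianPDFReal m2 v x := by
  unfold gaussianPDFReal
  gcongr (Real.sqrt (2 * Real.pi * v))⁻¹ * Real.exp ?_
  have h2v : (0:ℝ) < 2 * v := by positivity
  rw [div_le_div_iff_of_pos_right h2v]
  linarith

theorem stmt8 (μ s ρL ρU : ℝ) (hs : 0 < s) (hL : 0 < ρL) (hLU : ρL ≤ ρU)
    (hμ : |μ| ≤ ρU) (v : ℝ≥0) (hv : (v : ℝ) = s ^ 2) :
    erf (2 * ρU / (Real.sqrt 2 * s)) - erf ((ρL + ρU) / (Real.sqrt 2 * s)) ≤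
      ((gaussianReal μ v) {x : ℝ | ρL ≤ |x| ∧ |x| ≤ ρU}).toReal := by
  have hπ := Real.pi_pos
  have hρU : 0 < ρU := lt_of_lt_of_le hL hLU
  obtain ⟨hμ1, hμ2⟩ := abs_le.mp hμ
  have hvpos : (0:ℝ) < v := by rw [hv]; positivity
  have hv0 : v ≠ 0 := by
    intro h; rw [h] at hvpos; simp at hvpos
  have hset : {x : ℝ | ρL ≤ |x| ∧ |x| ≤ ρU} =
      Set.Icc (-ρU) (-ρL) ∪ Set.Icc ρL ρU := by
    ext x
    simp only [Set.mem_setOf_eq, Set.mem_union, Set.mem_Icc]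
    rcases le_or_gt 0 x with hx | hx
    · rw [abs_of_nonneg hx]
      constructor
      · rintro ⟨h1, h2⟩; right; exact ⟨h1, h2⟩
      · rintro (⟨h1, h2⟩ | ⟨h1, h2⟩) <;> constructor <;> linarith
    · rw [abs_of_neg hx]
      constructor
      · rintro ⟨h1, h2⟩; left; exact ⟨by linarith, by linarith⟩
      · rintro (⟨h1, h2⟩ | ⟨h1, h2⟩) <;> constructor <;> linarith
  rw [gaussianReal_apply_eq_integral μ hv0, hset,
    ENNReal.toReal_ofReal (setIntegral_nonneg
      (measurableSet_Icc.union measurableSet_Icc)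
      (fun x _ => gaussianPDFReal_nonneg μ v x))]
  rw [setIntegral_union (by
        apply Set.disjoint_left.mpr
        rintro x ⟨_, h2⟩ ⟨h3, _⟩
        linarith)
      measurableSet_Icc
      ((integrable_gaussianPDFReal μ v).integrableOn)
      ((integrable_gaussianPDFReal μ v).integrableOn)]
  -- pointwise bounds
  have h1 : ∫ x in Set.Icc ρL ρU, gaussianPDFReal (-ρU) v x ≤
      ∫ x in Set.Icc ρL ρU, gaussianPDFReal μ v x := by
    apply setIntegral_mono_on
      ((integrable_gaussianPDFReal _ v).integrableOn)
      ((integrable_gaussianPDFReal _ v).integrableOn)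
      measurableSet_Icc
    intro x hx
    exact pdf_mono_aux v hvpos (by nlinarith [hx.1, hx.2])
  have h2 : ∫ x in Set.Icc (-ρU) (-ρL), gaussianPDFReal ρU v x ≤
      ∫ x in Set.Icc (-ρU) (-ρL), gaussianPDFReal μ v x := by
    apply setIntegral_mono_on
      ((integrable_gaussianPDFReal _ v).integrableOn)
      ((integrable_gaussianPDFReal _ v).integrableOn)
      measurableSet_Icc
    intro x hx
    exact pdf_mono_aux v hvpos (by nlinarith [hx.1, hx.2])
  -- reflection
  have hrefl : ∫ x in Set.Icc (-ρU) (-ρL), gaussianPDFReal ρU v x =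
      ∫ x in Set.Icc ρL ρU, gaussianPDFReal (-ρU) v x := by
    rw [integral_Icc_eq_integral_Ioc, integral_Icc_eq_integral_Ioc,
      ← intervalIntegral.integral_of_le (by linarith : -ρU ≤ -ρL),
      ← intervalIntegral.integral_of_le hLU,
      ← intervalIntegral.integral_comp_neg (gaussianPDFReal ρU v)]
    apply intervalIntegral.integral_congr
    intro x _
    unfold gaussianPDFReal
    ring_nf
  have key : erf (2 * ρU / (Real.sqrt 2 * s)) - erf ((ρL + ρU) / (Real.sqrt 2 * s)) =
      2 * ∫ x in Set.Icc ρL ρU, gaussianPDFReal (-ρU) v x := by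
    have hcont : Continuous fun t : ℝ => Real.exp (-t ^ 2) := by continuity
    unfold erf
    rw [← mul_sub, intervalIntegral.integral_interval_sub_left
      (hcont.intervalIntegrable _ _) (hcont.intervalIntegrable _ _)]
    have hc' : Real.sqrt 2 * s ≠ 0 := by positivity
    have hstep : ∀ x : ℝ, Real.exp (-(x / (Real.sqrt 2 * s)) ^ 2) =
        Real.exp (-x ^ 2 / (2 * v)) := by
      intro x
      congr 1
      rw [div_pow, mul_pow, Real.sq_sqrt (by norm_num : (0:ℝ) ≤ 2)]
      rw [hv]
      ring
    have hsub : ∫ t in ((ρL + ρU) / (Real.sqrt 2 * s))..(2 * ρU / (Real.sqrt 2 * s)),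
        Real.exp (-t ^ 2) =
        (Real.sqrt 2 * s)⁻¹ * ∫ x in (ρL + ρU)..(2 * ρU), Real.exp (-x ^ 2 / (2 * v)) := by
      rw [show (∫ x in (ρL + ρU)..(2 * ρU), Real.exp (-x ^ 2 / (2 * (v:ℝ)))) =
          ∫ x in (ρL + ρU)..(2 * ρU), Real.exp (-(x / (Real.sqrt 2 * s)) ^ 2) from
          intervalIntegral.integral_congr (fun x _ => (hstep x).symm)]
      simp only [intervalIntegral.integral_comp_div (fun t => Real.exp (-t ^ 2)) hc',
        smul_eq_mul]
      rw [← mul_assoc, inv_mul_cancel₀ hc', one_mul]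
    rw [hsub]
    -- now compute the set integral
    rw [integral_Icc_eq_integral_Ioc, ← intervalIntegral.integral_of_le hLU]
    have hI : ∫ x in ρL..ρU, gaussianPDFReal (-ρU) v x =
        (Real.sqrt (2 * Real.pi * v))⁻¹ *
          ∫ x in (ρL + ρU)..(ρU + ρU), Real.exp (-x ^ 2 / (2 * v)) := by
      rw [← intervalIntegral.integral_const_mul]
      rw [← intervalIntegral.integral_comp_add_right
        (fun u => (Real.sqrt (2 * Real.pi * v))⁻¹ * Real.exp (-u ^ 2 / (2 * v))) ρU]
      apply intervalIntegral.integral_congr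
      intro x _
      unfold gaussianPDFReal
      ring_nf
    rw [hI, show ρU + ρU = 2 * ρU by ring]
    rw [← mul_assoc, ← mul_assoc]
    congr 1
    rw [show 2 * Real.pi * (v:ℝ) = (2 * Real.pi) * s ^ 2 by rw [hv],
      Real.sqrt_mul (by positivity) (s ^ 2), Real.sqrt_sq hs.le,
      show (2:ℝ) * Real.pi = 2 * Real.pi from rfl]
    rw [Real.sqrt_mul (by norm_num : (0:ℝ) ≤ 2) Real.pi]
    ring
  rw [key]
  linarith [hrefl ▸ h2, h1]
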